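/- Let Λ be a finite connected graph with oriented edges, r ≥ 2, and for each edge e a positive integer l(e), with r | l(e) whenever e is non-separating. For a separating edge e joining v₊ to v₋, removing e splits the graph into two components with vertex sets V⁺ (containing v₊) and V⁻; write ε_e⁺(t) = Σ_{v∈V⁺} t_v ∈ ℤ/rℤ. Let P_r ⊆ (ℤ/rℤ)^E be the product over edges of the subgroup of ℤ/rℤ of order gcd(r,l(e)). Then for t ∈ (ℤ/rℤ)^V with ε(t) = 0, the following are equivalent: (1) t lies in the image of P_r under the boundary ∂; (2) for every separating edge e, the element ε_e⁺(t) lies in the subgroup of ℤ/rℤ of order gcd(r, l(e)). -/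

import Mathlib

open scoped Classical

/-- Adjacency relation of an oriented (multi)graph given by source and target maps. -/
def GraphAdj {V E : Type*} (s t : E → V) (v w : V) : Prop :=
  ∃ e, (s e = v ∧ t e = w) ∨ (s e = w ∧ t e = v)

/-- The graph is connected: any two vertices are joined by a walk. -/
def GraphConnected {V E : Type*} (s t : E → V) : Prop :=
  ∀ v w : V, Relation.ReflTransGen (GraphAdj s t) v w

/-- The simplicial boundary map `∂ : (ℤ/rℤ)^E → (ℤ/rℤ)^V`. -/
def graphBoundary (r : ℕ) {V E : Type*} [Fintype E] [DecidableEq V]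
    (s t : E → V) (f : E → ZMod r) : V → ZMod r :=
  fun v => ∑ e, f e * (((if t e = v then 1 else 0) : ZMod r) - (if s e = v then 1 else 0))

/-- Membership in `P_r ⊆ (ℤ/rℤ)^E`: each coordinate lies in the subgroup of `ℤ/rℤ`
of order `gcd(r, l e)`, i.e. is killed by `gcd(r, l e)`. -/
def memPr (r : ℕ) {E : Type*} (l : E → ℕ) (f : E → ZMod r) : Prop :=
  ∀ e, ((Nat.gcd r (l e) : ℕ) : ZMod r) * f e = 0

/-- The partial augmentation `ε_{e₀}⁺(t)`: the sum of the coordinates of `t` over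
the vertices reachable from the head `t e₀` of the edge `e₀` in the graph with
`e₀` deleted. -/
noncomputable def epsPlus (r : ℕ) {V E : Type*} [Fintype V]
    (s t : E → V) (e₀ : E) (tv : V → ZMod r) : ZMod r :=
  ∑ v, if Relation.ReflTransGen
      (GraphAdj (fun e : {e : E // e ≠ e₀} => s e.1)
        (fun e : {e : E // e ≠ e₀} => t e.1)) (t e₀) v
    then tv v else 0

/-!
Let `e₀` be a separating edge of the connected graph. The set `A` of vertices reachable from
`t e₀` without using `e₀` contains `t e₀` but not `s e₀`, and every other edge has both or
neither of its endpoints in `A`. Summing `∂ f` over `A` therefore leaves only the contribution of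
`e₀`: `ε_{e₀}⁺(∂ f) = f e₀`, which gives the forward direction. Conversely, on a connected graph
`∂` maps onto the vectors of augmentation zero, since these are sums of dipoles `δ_w - δ_v`, each
the boundary of a walk from `v` to `w`. Any preimage `f` of `t` lies in `P_r`: at a separating
edge `f e₀ = ε_{e₀}⁺(t)`, and at a non-separating edge `P_e` is all of `ℤ/rℤ`.
-/

section Graph

variable {V E : Type*} {s t : E → V}

instance GraphAdj.instSymm : Std.Symm (GraphAdj s t) where
  symm _ _ := fun ⟨e, h⟩ => ⟨e, h.symm⟩

theorem not_reachable_source_of_not_connected_delete (hconn : GraphConnected s t) {e₀ : E}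
    (hsep : ¬ GraphConnected (fun e : {e : E // e ≠ e₀} => s e.1)
      (fun e : {e : E // e ≠ e₀} => t e.1)) :
    ¬ Relation.ReflTransGen (GraphAdj (fun e : {e : E // e ≠ e₀} => s e.1)
      (fun e : {e : E // e ≠ e₀} => t e.1)) (t e₀) (s e₀) := by
  intro hreach
  refine hsep fun v w => (hconn v w).lift' id ?_
  rintro a b ⟨e, hab⟩
  by_cases he : e = e₀
  · subst he
    rcases hab with ⟨rfl, rfl⟩ | ⟨rfl, rfl⟩
    exacts [Std.Symm.symm _ _ hreach, hreach]
  · exact .single ⟨⟨e, he⟩, hab⟩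

section Boundary

variable [Fintype E] [DecidableEq V] {r : ℕ}

theorem sum_ite_graphBoundary [Fintype V] (A : V → Prop) (f : E → ZMod r) :
    (∑ v, if A v then graphBoundary r s t f v else 0) =
      ∑ e, f e * ((if A (t e) then 1 else 0) - (if A (s e) then 1 else 0)) := by
  simp only [graphBoundary, ← Finset.sum_filter]
  rw [Finset.sum_comm]
  simp only [← Finset.mul_sum, Finset.sum_sub_distrib, Finset.sum_ite_eq, Finset.mem_filter,
    Finset.mem_univ, true_and]

theorem epsPlus_graphBoundary_of_not_connected [Fintype V] (hconn : GraphConnected s t)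
    {e₀ : E} (hsep : ¬ GraphConnected (fun e : {e : E // e ≠ e₀} => s e.1)
      (fun e : {e : E // e ≠ e₀} => t e.1)) (f : E → ZMod r) :
    epsPlus r s t e₀ (graphBoundary r s t f) = f e₀ := by
  set A := Relation.ReflTransGen (GraphAdj (fun e : {e : E // e ≠ e₀} => s e.1)
    (fun e : {e : E // e ≠ e₀} => t e.1)) (t e₀)
  have hclosed : ∀ e (he : e ≠ e₀), A (t e) ↔ A (s e) := fun e he =>
    ⟨fun h => h.tail ⟨⟨e, he⟩, .inr ⟨rfl, rfl⟩⟩, fun h => h.tail ⟨⟨e, he⟩, .inl ⟨rfl, rfl⟩⟩⟩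
  have hsource : ¬ A (s e₀) := not_reachable_source_of_not_connected_delete hconn hsep
  rw [epsPlus, sum_ite_graphBoundary A f, Finset.sum_eq_single e₀
    (fun e _ he => by simp [hclosed e he]) (by simp)]
  simp [hsource, A, Relation.ReflTransGen.refl]

theorem graphBoundary_add (f g : E → ZMod r) :
    graphBoundary r s t (f + g) = graphBoundary r s t f + graphBoundary r s t g := by
  ext v
  simp only [graphBoundary, Pi.add_apply, add_mul, Finset.sum_add_distrib]

theorem graphBoundary_single (e : E) (c : ZMod r) :
    graphBoundary r s t (Pi.single e c) = Pi.single (t e) c - Pi.single (s e) c := by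
  ext v
  rw [graphBoundary, Finset.sum_eq_single e (fun e' _ he' => by simp [he']) (by simp)]
  simp [Pi.single_apply, eq_comm, mul_sub]

def graphBoundaryHom (r : ℕ) (s t : E → V) : (E → ZMod r) →+ (V → ZMod r) :=
  AddMonoidHom.mk' (graphBoundary r s t) graphBoundary_add

theorem single_sub_single_mem_range {v w : V}
    (h : Relation.ReflTransGen (GraphAdj s t) v w) (c : ZMod r) :
    Pi.single w c - Pi.single v c ∈ (graphBoundaryHom r s t).range := by
  induction h with
  | refl => simp
  | @tail u w _ huw ih =>
    have hstep : Pi.single w c - Pi.single u c ∈ (graphBoundaryHom r s t).range := by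
      obtain ⟨e, ⟨rfl, rfl⟩ | ⟨rfl, rfl⟩⟩ := huw
      · exact ⟨Pi.single e c, graphBoundary_single e c⟩
      · refine ⟨Pi.single e (-c), ?_⟩
        rw [graphBoundaryHom, AddMonoidHom.mk'_apply, graphBoundary_single, Pi.single_neg,
          Pi.single_neg, neg_sub_neg]
    simpa using add_mem ih hstep

theorem exists_graphBoundary_eq [Fintype V] (hconn : GraphConnected s t) (tv : V → ZMod r)
    (htv : ∑ v, tv v = 0) : ∃ f, graphBoundary r s t f = tv := by
  rcases isEmpty_or_nonempty V with hV | ⟨⟨v₀⟩⟩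
  · exact ⟨0, Subsingleton.elim _ _⟩
  have hsingle : (∑ w, Pi.single v₀ (tv w) : V → ZMod r) = Pi.single v₀ (∑ w, tv w) :=
    (map_sum (AddMonoidHom.single (fun _ => ZMod r) v₀) tv _).symm
  have hdecomp : tv = ∑ w, (Pi.single w (tv w) - Pi.single v₀ (tv w)) := by
    rw [Finset.sum_sub_distrib, Finset.univ_sum_single, hsingle, htv, Pi.single_zero, sub_zero]
  rw [hdecomp]
  exact sum_mem fun w _ => single_sub_single_mem_range (hconn v₀ w) (tv w)

end Boundary

end Graph

theorem mem_image_restricted_boundary_iff_general {V E : Type*} [Fintype V] [Fintype E]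
    [DecidableEq V]
    (s t : E → V) (r : ℕ) (l : E → ℕ)
    (hconn : GraphConnected s t)
    (hnsl : ∀ e₀ : E, GraphConnected (fun e : {e : E // e ≠ e₀} => s e.1)
      (fun e : {e : E // e ≠ e₀} => t e.1) → r ∣ l e₀)
    (tv : V → ZMod r) (htv : (∑ v, tv v) = 0) :
    (∃ f : E → ZMod r, memPr r l f ∧ graphBoundary r s t f = tv) ↔
      ∀ e₀ : E, ¬ GraphConnected (fun e : {e : E // e ≠ e₀} => s e.1)
          (fun e : {e : E // e ≠ e₀} => t e.1) →
        ((Nat.gcd r (l e₀) : ℕ) : ZMod r) * epsPlus r s t e₀ tv = 0 := by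
  constructor
  · rintro ⟨f, hf, rfl⟩ e₀ hsep
    rw [epsPlus_graphBoundary_of_not_connected hconn hsep]
    exact hf e₀
  · intro hcut
    obtain ⟨f, rfl⟩ := exists_graphBoundary_eq hconn tv htv
    refine ⟨f, fun e => ?_, rfl⟩
    by_cases hsep : GraphConnected (fun e' : {e' : E // e' ≠ e} => s e'.1)
        (fun e' : {e' : E // e' ≠ e} => t e'.1)
    · rw [Nat.gcd_eq_left (hnsl e hsep), ZMod.natCast_self, zero_mul]
    · simpa [epsPlus_graphBoundary_of_not_connected hconn hsep] using hcut e hsep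

/-- Lemma 3.10: assume `r ∣ l e` for every non-separating edge `e`. Then for
`t : (ℤ/rℤ)^V` with `ε t = 0`, `t` lies in the image of `P_r` under `∂` iff for
every separating edge `e` the partial augmentation `ε_e⁺(t)` lies in the subgroup
`P_e ⊆ ℤ/rℤ` of order `gcd(r, l e)`. -/
theorem mem_image_restricted_boundary_iff {V E : Type*} [Fintype V] [Fintype E]
    [DecidableEq V]
    (s t : E → V) (r : ℕ) (hr : 2 ≤ r) (l : E → ℕ) (hl : ∀ e, 0 < l e)
    (hconn : GraphConnected s t)
    (hnsl : ∀ e₀ : E, GraphConnected (fun e : {e : E // e ≠ e₀} => s e.1)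
      (fun e : {e : E // e ≠ e₀} => t e.1) → r ∣ l e₀)
    (tv : V → ZMod r) (htv : (∑ v, tv v) = 0) :
    (∃ f : E → ZMod r, memPr r l f ∧ graphBoundary r s t f = tv) ↔
      ∀ e₀ : E, ¬ GraphConnected (fun e : {e : E // e ≠ e₀} => s e.1)
          (fun e : {e : E // e ≠ e₀} => t e.1) →
        ((Nat.gcd r (l e₀) : ℕ) : ZMod r) * epsPlus r s t e₀ tv = 0 :=
  mem_image_restricted_boundary_iff_general s t r l hconn hnsl tv htv
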